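/- Given a Post problem (φ₁,ψ₁),...,(φₙ,ψₙ), a nonempty sequence of indices i₁,...,iₚ is a solution if and only if the terms (φ̂_{i₁} (... (φ̂_{iₚ} c)...)) and (ψ̂_{i₁} (... (ψ̂_{iₚ} c)...)) are β-equivalent in the context Γ. -/

import Mathlib

/-!
Reducing the head redex of `φ̂ v` and then the one inside it shows `φ̂ v ↠ x₁ (x₂ (... (xₖ v)))`
with the letters of `φ` read as `a`, `b`; hence `(φ̂_{i₁} (... (φ̂_{iₚ} c)...))` reduces to the
β-normal term that spells the concatenation `φ_{i₁}...φ_{iₚ}` around `c`. Equal concatenations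
thus give a common reduct. Conversely, by Church–Rosser (Tait–Martin-Löf: parallel reduction has
the triangle property with respect to complete development) convertible normal terms are equal,
and the spelling of a word around `c` determines the word.
-/

namespace LamPi

/-- Terms of the λΠ-calculus (de Bruijn indices). -/
inductive Tm : Type
  | type | kind
  | var (n : ℕ)
  | app (t u : Tm)
  | lam (A b : Tm)
  | pi  (A B : Tm)
deriving DecidableEq

/-- Lift free variables ≥ d by one. -/
def lift (d : ℕ) : Tm → Tm
  | .type => .type
  | .kind => .kind
  | .var n => if n < d then .var n else .var (n + 1)
  | .app t u => .app (lift d t) (lift d u)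
  | .lam A b => .lam (lift d A) (lift (d + 1) b)
  | .pi A B => .pi (lift d A) (lift (d + 1) B)

def liftN (k : ℕ) (t : Tm) : Tm := (lift 0)^[k] t

/-- Substitute u for the variable k. -/
def subst (k : ℕ) (u : Tm) : Tm → Tm
  | .type => .type
  | .kind => .kind
  | .var n => if n = k then u else if k < n then .var (n - 1) else .var n
  | .app t t' => .app (subst k u t) (subst k u t')
  | .lam A b => .lam (subst k u A) (subst (k + 1) (lift 0 u) b)
  | .pi A B => .pi (subst k u A) (subst (k + 1) (lift 0 u) B)

/-- One-step β-reduction. -/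
inductive Step : Tm → Tm → Prop
  | beta (A b u) : Step (.app (.lam A b) u) (subst 0 u b)
  | appL {t t'} (u) : Step t t' → Step (.app t u) (.app t' u)
  | appR (t) {u u'} : Step u u' → Step (.app t u) (.app t u')
  | lamA {A A'} (b) : Step A A' → Step (.lam A b) (.lam A' b)
  | lamB (A) {b b'} : Step b b' → Step (.lam A b) (.lam A b')
  | piA {A A'} (B) : Step A A' → Step (.pi A B) (.pi A' B)
  | piB (A) {B B'} : Step B B' → Step (.pi A B) (.pi A B')

/-- Many-step β-reduction. -/
def Red : Tm → Tm → Prop := Relation.ReflTransGen Step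

/-- β-equivalence ≅. -/
def Conv : Tm → Tm → Prop := Relation.EqvGen Step

/-- A term is normal if it contains no β-redex. -/
def Normal (t : Tm) : Prop := ∀ u, ¬ Step t u

def IsSort (s : Tm) : Prop := s = .type ∨ s = .kind

mutual
  /-- Well-formed contexts (head of the list is the most recent declaration). -/
  inductive WF : List Tm → Prop
    | nil : WF []
    | cons {Γ A s} : Typing Γ A s → IsSort s → WF (A :: Γ)
  /-- The typing judgement Γ ⊢ t : T of the λΠ-calculus. -/
  inductive Typing : List Tm → Tm → Tm → Prop
    | sort {Γ} : WF Γ → Typing Γ .type .kind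
    | var {Γ n A} : WF Γ → Γ[n]? = some A → Typing Γ (.var n) (liftN (n + 1) A)
    | pi {Γ A B s} : Typing Γ A .type → Typing (A :: Γ) B s → IsSort s →
        Typing Γ (.pi A B) s
    | lam {Γ A B b s} : Typing Γ (.pi A B) s → IsSort s → Typing (A :: Γ) b B →
        Typing Γ (.lam A b) (.pi A B)
    | app {Γ t u A B} : Typing Γ t (.pi A B) → Typing Γ u A →
        Typing Γ (.app t u) (subst 0 u B)
    | conv {Γ t A B s} : Typing Γ t A → Typing Γ A s → Typing Γ B s → IsSort s →
        Conv A B → Typing Γ t B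
end

/-- t is an object in Γ : it has a type T with Γ ⊢ T : Type. -/
def IsObject (Γ : List Tm) (t : Tm) : Prop := ∃ T, Typing Γ t T ∧ Typing Γ T .type

/-- The context Γ = [T:Type; a:T→T; b:T→T; c:T; d:T; P:T→Type; F:Πx:T.((P x)→T)].
Most recent declaration first: F = var 0, P = var 1, d = var 2, c = var 3,
b = var 4, a = var 5, T = var 6. -/
def Ctx0 : List Tm :=
  [ .pi (.var 5) (.pi (.app (.var 1) (.var 0)) (.var 7)),  -- F : Πx:T.((P x) → T)
    .pi (.var 4) .type,                                    -- P : T → Type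
    .var 3,                                                -- d : T
    .var 2,                                                -- c : T
    .pi (.var 1) (.var 2),                                 -- b : T → T
    .pi (.var 0) (.var 1),                                 -- a : T → T
    .type ]                                                -- T : Type

/-- The two-letter alphabet {A, B}. -/
inductive AB : Type
  | A | B
deriving DecidableEq

instance : Primcodable AB :=
  Primcodable.ofEquiv Bool
    ⟨fun x => match x with | .A => false | .B => true,
     fun b => if b then .B else .A,
     fun x => by cases x <;> rfl, fun b => by cases b <;> rfl⟩

/-- The encoding φ̂ of a word φ over {A,B} as a term of type T → T in Ctx0:
ε̂ = λy:T.y, (Aφ)̂ = λy:T.(a (φ̂ y)), (Bφ)̂ = λy:T.(b (φ̂ y)). -/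
def hat : List AB → Tm
  | [] => .lam (.var 6) (.var 0)
  | .A :: w => .lam (.var 6) (.app (.var 6) (.app (lift 0 (hat w)) (.var 0)))
  | .B :: w => .lam (.var 6) (.app (.var 5) (.app (lift 0 (hat w)) (.var 0)))

/-- λy:T.y in Ctx0. -/
def idT : Tm := .lam (.var 6) (.var 0)

/-- Iterated application (h u₁ ... uₙ). -/
def appList : Tm → List Tm → Tm
  | h, [] => h
  | h, u :: us => appList (.app h u) us

/-- Iterated abstraction λx₁:T₁....λxₙ:Tₙ.b. -/
def absList : List Tm → Tm → Tm
  | [], b => b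
  | A :: Ts, b => .lam A (absList Ts b)

/-- A solution of the Post problem: a nonempty sequence of indices whose
φ-concatenation equals its ψ-concatenation. -/
def HasSolution (pcp : List (List AB × List AB)) : Prop :=
  ∃ is : List (Fin pcp.length), is ≠ [] ∧
    (is.map fun i => (pcp.get i).1).flatten = (is.map fun i => (pcp.get i).2).flatten

/-- Head symbols: a free variable, a top variable (bound by one of the leading
abstractions), a sort, or (by convention) Π. -/
inductive HeadSym : Type
  | fvar (n : ℕ) | bvar (i : ℕ) | sType | sKind | hpi
deriving DecidableEq

def headSymbolAux : ℕ → Tm → HeadSym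
  | d, .lam _ b => headSymbolAux (d + 1) b
  | d, .app t _ => headSymbolAux d t
  | _, .pi _ _ => .hpi
  | _, .type => .sType
  | _, .kind => .sKind
  | d, .var n => if n < d then .bvar (d - 1 - n) else .fvar (n - d)

/-- The head symbol of a term (`bvar i` means the i-th top variable). -/
def headSymbol (t : Tm) : HeadSym := headSymbolAux 0 t

/-- (T→T) → ... → (T→T) → T with n arguments, where T is the variable k. -/
def nArr (k : ℕ) : ℕ → Tm
  | 0 => .var k
  | n + 1 => .pi (.pi (.var k) (.var (k + 1))) (nArr (k + 1) n)

/-- (T→T) → ... → (T→T) → Type with n arguments, where T is the variable k. -/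
def nArrTy (k : ℕ) : ℕ → Tm
  | 0 => .type
  | n + 1 => .pi (.pi (.var k) (.var (k + 1))) (nArrTy (k + 1) n)

/-- λx₁:T→T....λxₙ:T→T.body, where T is the variable k. -/
def lamChain (k : ℕ) : ℕ → Tm → Tm
  | 0, body => body
  | n + 1, body => .lam (.pi (.var k) (.var (k + 1))) (lamChain (k + 1) n body)

/-- Πx₁:T→T....Πxₙ:T→T.body, where T is the variable k. -/
def piChain (k : ℕ) : ℕ → Tm → Tm
  | 0, body => body
  | n + 1, body => .pi (.pi (.var k) (.var (k + 1))) (piChain (k + 1) n body)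

/-- (x_{i₁} (... (x_{iₚ} c)...)) under n leading binders in Ctx0: the j-th top
variable (0-indexed) is de Bruijn variable n-1-j, and c is variable 3+n. -/
def spine (n : ℕ) (is : List ℕ) : Tm :=
  is.foldr (fun i acc => .app (.var (n - 1 - i)) acc) (.var (3 + n))

/-- Pure (untyped) λ-terms. `fvar j` denotes the j-th free variable counted from
the bottom of the ambient context (so it is stable under context extension);
`bvar` is a de Bruijn index for bound variables. -/
inductive PTm : Type
  | bvar (n : ℕ) | fvar (n : ℕ) | app (t u : PTm) | lam (t : PTm)
deriving DecidableEq

/-- The content |t| of a term: erase all type annotations. L is the length of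
the ambient context, d the current binding depth. -/
def eraseAux (L : ℕ) : ℕ → Tm → PTm
  | d, .var n => if n < d then .bvar n else .fvar (L - 1 - (n - d))
  | d, .app t u => .app (eraseAux L d t) (eraseAux L d u)
  | d, .lam _ b => .lam (eraseAux L (d + 1) b)
  | _, _ => .bvar 0

def erase (L : ℕ) (t : Tm) : PTm := eraseAux L 0 t

/-- A pure term p is typable in Γ if some well-typed object t' in an extension
Δ ++ Γ of Γ has content p. -/
def Typable (Γ : List Tm) (p : PTm) : Prop :=
  ∃ (Δ : List Tm) (t : Tm), IsObject (Δ ++ Γ) t ∧ erase (Δ.length + Γ.length) t = p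

/-- An injective Gödel numbering of pure terms. -/
def PTm.enc : PTm → ℕ
  | .bvar n => Nat.pair 0 n
  | .fvar n => Nat.pair 1 n
  | .app t u => Nat.pair 2 (Nat.pair t.enc u.enc)
  | .lam t => Nat.pair 3 t.enc

/-- The untyped erasure φ̃ = |φ̂| of the encoding of a word (in Ctx0:
a = fvar 1, b = fvar 2). -/
def tilde : List AB → PTm
  | [] => .lam (.bvar 0)
  | .A :: w => .lam (.app (.fvar 1) (.app (tilde w) (.bvar 0)))
  | .B :: w => .lam (.app (.fvar 2) (.app (tilde w) (.bvar 0)))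

def pAppList : PTm → List PTm → PTm
  | h, [] => h
  | h, u :: us => pAppList (.app h u) us

/-- The pure term t = λf.λg.λh.(f (g a ... a) (h (g φ̃₁ ... φ̃ₙ)) (h (g ψ̃₁ ... ψ̃ₙ))
(F c (g (λy.y) ... (λy.y))) (F d (g (λy.d) ... (λy.d)))) associated to a Post
problem (in Ctx0: a = fvar 1, c = fvar 3, d = fvar 4, F = fvar 6;
f = bvar 2, g = bvar 1, h = bvar 0 under the three abstractions). -/
def postTerm (pcp : List (List AB × List AB)) : PTm :=
  let n := pcp.length
  .lam (.lam (.lam (pAppList (.bvar 2)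
    [ pAppList (.bvar 1) (List.replicate n (.fvar 1)),
      .app (.bvar 0) (pAppList (.bvar 1) (pcp.map fun pr => tilde pr.1)),
      .app (.bvar 0) (pAppList (.bvar 1) (pcp.map fun pr => tilde pr.2)),
      .app (.app (.fvar 6) (.fvar 3)) (pAppList (.bvar 1) (List.replicate n (.lam (.bvar 0)))),
      .app (.app (.fvar 6) (.fvar 4)) (pAppList (.bvar 1) (List.replicate n (.lam (.fvar 4)))) ])))

/-! ### Simply typed λ-calculus -/

/-- Simple types over one base type T. -/
inductive STy : Type
  | base | arr (A B : STy)
deriving DecidableEq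

/-- Curry-style simple typing of pure terms: Φ types the free variables
(fvar j has type Φ.get? j), Γ the bound ones. -/
inductive SJC : List STy → List STy → PTm → STy → Prop
  | bvar {Φ Γ n A} : Γ[n]? = some A → SJC Φ Γ (.bvar n) A
  | fvar {Φ Γ n A} : Φ[n]? = some A → SJC Φ Γ (.fvar n) A
  | app {Φ Γ t u A B} : SJC Φ Γ t (.arr A B) → SJC Φ Γ u A → SJC Φ Γ (.app t u) B
  | lam {Φ Γ t A B} : SJC Φ (A :: Γ) t B → SJC Φ Γ (.lam t) (.arr A B)

/-- A pure term is typable in the simply typed λ-calculus. -/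
def STypable (p : PTm) : Prop := ∃ Φ A, SJC Φ [] p A

/-- Church-style simply typed terms with constants a, b : T→T and c, d : T. -/
inductive STm : Type
  | var (n : ℕ) | ca | cb | cc | cd | app (t u : STm) | lam (A : STy) (b : STm)
deriving DecidableEq

def slift (d : ℕ) : STm → STm
  | .var n => if n < d then .var n else .var (n + 1)
  | .ca => .ca | .cb => .cb | .cc => .cc | .cd => .cd
  | .app t u => .app (slift d t) (slift d u)
  | .lam A b => .lam A (slift (d + 1) b)

def ssubst (k : ℕ) (u : STm) : STm → STm
  | .var n => if n = k then u else if k < n then .var (n - 1) else .var n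
  | .ca => .ca | .cb => .cb | .cc => .cc | .cd => .cd
  | .app t t' => .app (ssubst k u t) (ssubst k u t')
  | .lam A b => .lam A (ssubst (k + 1) (slift 0 u) b)

inductive SStep : STm → STm → Prop
  | beta (A b u) : SStep (.app (.lam A b) u) (ssubst 0 u b)
  | appL {t t'} (u) : SStep t t' → SStep (.app t u) (.app t' u)
  | appR (t) {u u'} : SStep u u' → SStep (.app t u) (.app t u')
  | lamB (A) {b b'} : SStep b b' → SStep (.lam A b) (.lam A b')

def SConv : STm → STm → Prop := Relation.EqvGen SStep

inductive ST : List STy → STm → STy → Prop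
  | var {Γ n A} : Γ[n]? = some A → ST Γ (.var n) A
  | ca {Γ} : ST Γ .ca (.arr .base .base)
  | cb {Γ} : ST Γ .cb (.arr .base .base)
  | cc {Γ} : ST Γ .cc .base
  | cd {Γ} : ST Γ .cd .base
  | app {Γ t u A B} : ST Γ t (.arr A B) → ST Γ u A → ST Γ (.app t u) B
  | lam {Γ A B b} : ST (A :: Γ) b B → ST Γ (.lam A b) (.arr A B)

/-- The third-order type (T→T) → ... → (T→T) → T with n arguments. -/
def nSTy : ℕ → STy
  | 0 => .base
  | n + 1 => .arr (.arr .base .base) (nSTy n)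

def sAppList : STm → List STm → STm
  | h, [] => h
  | h, u :: us => sAppList (.app h u) us

def STm.enc : STm → ℕ
  | .var n => Nat.pair 0 n
  | .ca => Nat.pair 1 0
  | .cb => Nat.pair 1 1
  | .cc => Nat.pair 1 2
  | .cd => Nat.pair 1 3
  | .app t u => Nat.pair 2 (Nat.pair t.enc u.enc)
  | .lam _ b => Nat.pair 3 b.enc

def encList (l : List ℕ) : ℕ := l.foldr (fun a b => Nat.pair a b + 1) 0

/-- Gödel numbering of a unification problem
(f t₁...tₙ) = (f t'₁...t'ₙ), (f u₁...uₙ) = u', (f v₁...vₙ) = v'. -/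
def encP (n : ℕ) (ts ts' us vs : List STm) (u' v' : STm) : ℕ :=
  Nat.pair n (Nat.pair (encList (ts.map STm.enc)) (Nat.pair (encList (ts'.map STm.enc))
    (Nat.pair (encList (us.map STm.enc)) (Nat.pair (encList (vs.map STm.enc))
      (Nat.pair u'.enc v'.enc)))))

/-- The unification system has a common solution for f. -/
def HasUnifSolution (n : ℕ) (ts ts' us vs : List STm) (u' v' : STm) : Prop :=
  ∃ f : STm, ST [] f (nSTy n) ∧
    SConv (sAppList f ts) (sAppList f ts') ∧
    SConv (sAppList f us) u' ∧
    SConv (sAppList f vs) v'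

end LamPi

namespace LamPi

/-- (φ̂_{i₁} (... (φ̂_{iₚ} c)...)) for a sequence of words. -/
def hatApp : List (List AB) → Tm
  | [] => .var 3
  | w :: ws => .app (hat w) (hatApp ws)

theorem lift_lift (t : Tm) {i j : ℕ} (h : i ≤ j) :
    lift i (lift j t) = lift (j + 1) (lift i t) := by
  induction t generalizing i j with
  | type | kind => rfl
  | var n => grind [lift]
  | app t u iht ihu => simp [lift, iht h, ihu h]
  | lam A b ihA ihb | pi A b ihA ihb => simp [lift, ihA h, ihb (Nat.succ_le_succ h)]

theorem lift_subst_of_le (t : Tm) {d k : ℕ} (u : Tm) (h : d ≤ k) :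
    lift d (subst k u t) = subst (k + 1) (lift d u) (lift d t) := by
  induction t generalizing d k u with
  | type | kind => rfl
  | var n => grind [lift, subst]
  | app t t' iht iht' => simp [lift, subst, iht u h, iht' u h]
  | lam A b ihA ihb | pi A b ihA ihb =>
      simp only [lift, subst, ihA u h, ihb (lift 0 u) (Nat.succ_le_succ h),
        lift_lift u (Nat.zero_le d)]

theorem lift_subst_of_ge (t : Tm) {d k : ℕ} (u : Tm) (h : k ≤ d) :
    lift d (subst k u t) = subst k (lift d u) (lift (d + 1) t) := by
  induction t generalizing d k u with
  | type | kind => rfl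
  | var n => grind [lift, subst]
  | app t t' iht iht' => simp [lift, subst, iht u h, iht' u h]
  | lam A b ihA ihb | pi A b ihA ihb =>
      simp only [lift, subst, ihA u h, ihb (lift 0 u) (Nat.succ_le_succ h),
        lift_lift u (Nat.zero_le d)]

theorem subst_lift (t : Tm) (k : ℕ) (u : Tm) : subst k u (lift k t) = t := by
  induction t generalizing k u with
  | type | kind => rfl
  | var n => grind [lift, subst]
  | app t t' iht iht' => simp [lift, subst, iht, iht']
  | lam A b ihA ihb | pi A b ihA ihb => simp [lift, subst, ihA, ihb]

theorem subst_subst (t : Tm) {j k : ℕ} (u w : Tm) (h : j ≤ k) :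
    subst k u (subst j w t) = subst j (subst k u w) (subst (k + 1) (lift j u) t) := by
  induction t generalizing j k u w with
  | type | kind => rfl
  | var n => grind [subst, subst_lift]
  | app t t' iht iht' => simp [subst, iht u w h, iht' u w h]
  | lam A b ihA ihb | pi A b ihA ihb =>
      simp only [subst, ihA u w h, ihb (lift 0 u) (lift 0 w) (Nat.succ_le_succ h),
        lift_subst_of_le w u (Nat.zero_le k), lift_lift u (Nat.zero_le j)]

inductive Par : Tm → Tm → Prop
  | type : Par .type .type
  | kind : Par .kind .kind
  | var (n) : Par (.var n) (.var n)
  | app {t t' u u'} : Par t t' → Par u u' → Par (.app t u) (.app t' u')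
  | lam {A A' b b'} : Par A A' → Par b b' → Par (.lam A b) (.lam A' b')
  | pi {A A' B B'} : Par A A' → Par B B' → Par (.pi A B) (.pi A' B')
  | beta {A b b' u u'} : Par b b' → Par u u' → Par (.app (.lam A b) u) (subst 0 u' b')

namespace Par

theorem refl (t : Tm) : Par t t := by
  induction t with
  | type => exact .type
  | kind => exact .kind
  | var n => exact .var n
  | app _ _ iht ihu => exact .app iht ihu
  | lam _ _ ihA ihb => exact .lam ihA ihb
  | pi _ _ ihA ihB => exact .pi ihA ihB

theorem lift {t t' : Tm} (h : Par t t') (d : ℕ) : Par (lift d t) (lift d t') := by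
  induction h generalizing d with
  | type => exact .type
  | kind => exact .kind
  | var n => exact refl _
  | app _ _ iht ihu => exact .app (iht d) (ihu d)
  | lam _ _ ihA ihb => exact .lam (ihA d) (ihb (d + 1))
  | pi _ _ ihA ihB => exact .pi (ihA d) (ihB (d + 1))
  | @beta _ _ b' _ u' _ _ ihb ihu =>
      rw [lift_subst_of_ge b' u' (Nat.zero_le d)]
      exact .beta (ihb (d + 1)) (ihu d)

theorem subst {t t' u u' : Tm} (ht : Par t t') (hu : Par u u') (k : ℕ) :
    Par (subst k u t) (subst k u' t') := by
  induction ht generalizing k u u' with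
  | type => exact .type
  | kind => exact .kind
  | var n => simp only [LamPi.subst]; split_ifs <;> first | exact hu | exact refl _
  | app _ _ iht ihv => exact .app (iht hu k) (ihv hu k)
  | lam _ _ ihA ihb => exact .lam (ihA hu k) (ihb (hu.lift 0) (k + 1))
  | pi _ _ ihA ihB => exact .pi (ihA hu k) (ihB (hu.lift 0) (k + 1))
  | @beta _ _ b' _ v' _ _ ihb ihv =>
      rw [subst_subst b' u' v' (Nat.zero_le k)]
      exact .beta (ihb (hu.lift 0) (k + 1)) (ihv hu k)

end Par

theorem Step.par {t u : Tm} (h : Step t u) : Par t u := by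
  induction h with
  | beta A b u => exact .beta (.refl b) (.refl u)
  | appL u _ ih => exact .app ih (.refl u)
  | appR t _ ih => exact .app (.refl t) ih
  | lamA b _ ih => exact .lam ih (.refl b)
  | lamB A _ ih => exact .lam (.refl A) ih
  | piA B _ ih => exact .pi ih (.refl B)
  | piB A _ ih => exact .pi (.refl A) ih

theorem Red.app {t t' u u' : Tm} (ht : Red t t') (hu : Red u u') :
    Red (.app t u) (.app t' u') :=
  (ht.lift (Tm.app · u) fun _ _ => Step.appL u).trans (hu.lift (Tm.app t') fun _ _ => Step.appR t')

theorem Red.lam {A A' b b' : Tm} (hA : Red A A') (hb : Red b b') :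
    Red (.lam A b) (.lam A' b') :=
  (hA.lift (Tm.lam · b) fun _ _ => Step.lamA b).trans (hb.lift (Tm.lam A') fun _ _ => Step.lamB A')

theorem Red.pi {A A' B B' : Tm} (hA : Red A A') (hB : Red B B') :
    Red (.pi A B) (.pi A' B') :=
  (hA.lift (Tm.pi · B) fun _ _ => Step.piA B).trans (hB.lift (Tm.pi A') fun _ _ => Step.piB A')

theorem Par.red {t u : Tm} (h : Par t u) : Red t u := by
  induction h with
  | type | kind | var => exact .refl
  | app _ _ iht ihu => exact iht.app ihu
  | lam _ _ ihA ihb => exact ihA.lam ihb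
  | pi _ _ ihA ihB => exact ihA.pi ihB
  | @beta A _ b' _ u' _ _ ihb ihu => exact ((Red.lam .refl ihb).app ihu).tail (.beta A b' u')

theorem reflTransGen_par_eq_red : Relation.ReflTransGen Par = Red :=
  le_antisymm (Relation.reflTransGen_closed fun _ _ => Par.red)
    (Relation.ReflTransGen.mono fun _ _ => Step.par)

def develop : Tm → Tm
  | .type => .type
  | .kind => .kind
  | .var n => .var n
  | .app (.lam _ b) u => subst 0 (develop u) (develop b)
  | .app t u => .app (develop t) (develop u)
  | .lam A b => .lam (develop A) (develop b)
  | .pi A B => .pi (develop A) (develop B)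

theorem Par.par_develop {t u : Tm} (h : Par t u) : Par u (develop t) := by
  induction h with
  | type => exact .type
  | kind => exact .kind
  | var n => exact .var n
  | @app t _ _ _ ht _ iht ihu =>
      cases t with
      | lam A b =>
          cases ht with
          | lam _ _ =>
              cases iht with
              | lam _ ihb => exact .beta ihb ihu
      | _ => exact .app iht ihu
  | lam _ _ ihA ihb => exact .lam ihA ihb
  | pi _ _ ihA ihB => exact .pi ihA ihB
  | beta _ _ ihb ihu => exact ihb.subst ihu 0

theorem Conv.join_red {t u : Tm} (h : Conv t u) : Relation.Join Red t u := by
  have hequiv : Equivalence (Relation.Join (Relation.ReflTransGen Par)) :=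
    Relation.equivalence_join_reflTransGen fun t _ _ hb hc =>
      ⟨develop t, .single hb.par_develop, .single hc.par_develop⟩
  rw [← reflTransGen_par_eq_red, ← hequiv.eqvGen_iff]
  exact Relation.EqvGen.mono (fun _ u hs => ⟨u, .single hs.par, .refl⟩) _ _ h

theorem Normal.eq_of_red {t u : Tm} (ht : Normal t) (h : Red t u) : t = u := by
  rcases h.cases_head with rfl | ⟨v, hv, -⟩
  · rfl
  · exact absurd hv (ht v)

theorem Conv.eq_of_normal {t u : Tm} (h : Conv t u) (ht : Normal t) (hu : Normal u) : t = u := by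
  obtain ⟨v, htv, huv⟩ := h.join_red
  rw [ht.eq_of_red htv, hu.eq_of_red huv]

theorem Step.beta_of_eq {A b u r : Tm} (h : subst 0 u b = r) : Step (.app (.lam A b) u) r :=
  h ▸ .beta A b u

def letterVar : AB → Tm
  | .A => .var 5
  | .B => .var 4

theorem letterVar_injective : Function.Injective letterVar := by
  intro x y h; cases x <;> cases y <;> first | rfl | cases h

def applyWord (w : List AB) (v : Tm) : Tm :=
  w.foldr (fun x acc => .app (letterVar x) acc) v

theorem applyWord_append (w w' : List AB) (v : Tm) :
    applyWord (w ++ w') v = applyWord w (applyWord w' v) :=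
  List.foldr_append

theorem normal_applyWord (w : List AB) (n : ℕ) : Normal (applyWord w (.var n)) := by
  induction w with
  | nil => intro v h; cases h
  | cons x w ih =>
      intro v h
      cases x <;> cases h with
      | appL _ h => cases h
      | appR _ h => exact ih _ h

theorem applyWord_var_injective (n : ℕ) : Function.Injective fun w => applyWord w (.var n) := by
  intro w w' h
  induction w generalizing w' with
  | nil => cases w' <;> first | rfl | cases h
  | cons x w ih =>
      cases w' with
      | nil => cases h
      | cons y w' =>
          obtain ⟨hxy, hw⟩ := Tm.app.inj h
          rw [letterVar_injective hxy, ih hw]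

theorem red_app_hat (w : List AB) (v : Tm) : Red (.app (hat w) v) (applyWord w v) := by
  induction w with
  | nil => exact .single (.beta _ _ v)
  | cons x w ih =>
      have hstep : Step (.app (hat (x :: w)) v) (.app (letterVar x) (.app (hat w) v)) := by
        cases x <;> exact .beta_of_eq (by simp [subst, subst_lift, letterVar])
      exact .head hstep (Red.app .refl ih)

theorem red_hatApp (ws : List (List AB)) : Red (hatApp ws) (applyWord ws.flatten (.var 3)) := by
  induction ws with
  | nil => exact .refl
  | cons w ws ih =>
      rw [List.flatten_cons, applyWord_append]
      exact (Red.app .refl ih).trans (red_app_hat w _)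

theorem conv_hatApp_iff (ws ws' : List (List AB)) :
    Conv (hatApp ws) (hatApp ws') ↔ ws.flatten = ws'.flatten := by
  have hconv : Equivalence Conv := Relation.EqvGen.is_equivalence Step
  have hred : Conv (hatApp ws) _ := Relation.EqvGen.reflTransGen_le_eqvGen _ _ _ (red_hatApp ws)
  have hred' : Conv (hatApp ws') _ := Relation.EqvGen.reflTransGen_le_eqvGen _ _ _ (red_hatApp ws')
  constructor
  · intro h
    have hnf := hconv.trans (hconv.symm hred) (hconv.trans h hred')
    exact applyWord_var_injective 3 (hnf.eq_of_normal (normal_applyWord _ _) (normal_applyWord _ _))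
  · intro h
    rw [h] at hred
    exact hconv.trans hred (hconv.symm hred')

/-- a nonempty sequence of indices is a solution of the Post
problem iff the corresponding encoded applications are β-equivalent. -/
theorem solution_iff_conv (pcp : List (List AB × List AB))
    (is : List (Fin pcp.length)) (hne : is ≠ []) :
    (is.map fun i => (pcp.get i).1).flatten = (is.map fun i => (pcp.get i).2).flatten ↔
      Conv (hatApp (is.map fun i => (pcp.get i).1))
           (hatApp (is.map fun i => (pcp.get i).2)) :=
  (conv_hatApp_iff _ _).symm

end LamPi
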